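/- arXiv:math/0303251 — 6 statements merged into one kernel-verified Lean document; each statement's English description precedes it below -/
import Mathlib

section
/- For every n ∈ ℕ, the map K defined by K(a, b; c, d) = (−c + ⌈d/b⌉·a, −d + ⌈d/b⌉·b; a, b) is a well-defined bijection from S_n ∖ Y_n onto S_n ∖ X_n, and its inverse is given by K⁻¹(a', b'; c', d') = (c', d'; −a' + ⌈a'/c'⌉·c', −b' + ⌈a'/c'⌉·d'). -/
/-- `Sset n`: 2×2 integer matrices `(a, b; c, d)` with `a > c ≥ 0`, `d > b ≥ 0`
and `a*d - b*c = n`. -/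
def Sset (n : ℕ) : Set (Matrix (Fin 2) (Fin 2) ℤ) :=
  {A | 0 ≤ A 1 0 ∧ A 1 0 < A 0 0 ∧ 0 ≤ A 0 1 ∧ A 0 1 < A 1 1 ∧
    A 0 0 * A 1 1 - A 0 1 * A 1 0 = (n : ℤ)}

/-- `Xset n = {(c, a; 0, n/c) : c ∣ n, 0 ≤ a < n/c}`. -/
def Xset (n : ℕ) : Set (Matrix (Fin 2) (Fin 2) ℤ) :=
  {A | ∃ c a : ℤ, c ∣ (n : ℤ) ∧ 0 ≤ a ∧ a < (n : ℤ) / c ∧ A = !![c, a; 0, (n : ℤ) / c]}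

/-- `Yset n = {(c, 0; a, n/c) : c ∣ n, 0 ≤ a < c}`. -/
def Yset (n : ℕ) : Set (Matrix (Fin 2) (Fin 2) ℤ) :=
  {A | ∃ c a : ℤ, c ∣ (n : ℤ) ∧ 0 ≤ a ∧ a < c ∧ A = !![c, 0; a, (n : ℤ) / c]}

/-- The operator `K(a, b; c, d) = (−c + ⌈d/b⌉·a, −d + ⌈d/b⌉·b; a, b)`. -/
def Kop (A : Matrix (Fin 2) (Fin 2) ℤ) : Matrix (Fin 2) (Fin 2) ℤ :=
  !![-A 1 0 + ⌈(A 1 1 : ℚ) / (A 0 1 : ℚ)⌉ * A 0 0,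
     -A 1 1 + ⌈(A 1 1 : ℚ) / (A 0 1 : ℚ)⌉ * A 0 1;
     A 0 0, A 0 1]

/-- The operator `K⁻¹(a', b'; c', d') = (c', d'; −a' + ⌈a'/c'⌉·c', −b' + ⌈a'/c'⌉·d')`. -/
def Kinv (A : Matrix (Fin 2) (Fin 2) ℤ) : Matrix (Fin 2) (Fin 2) ℤ :=
  !![A 1 0, A 1 1;
     -A 0 0 + ⌈(A 0 0 : ℚ) / (A 1 0 : ℚ)⌉ * A 1 0,
     -A 0 1 + ⌈(A 0 0 : ℚ) / (A 1 0 : ℚ)⌉ * A 1 1]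

lemma ceil_spec (x y : ℤ) (hy : 0 < y) :
    ⌈(x:ℚ)/(y:ℚ)⌉ * y - y < x ∧ x ≤ ⌈(x:ℚ)/(y:ℚ)⌉ * y := by
  have hyq : (0:ℚ) < (y:ℚ) := by exact_mod_cast hy
  have hc : ((x:ℚ)/(y:ℚ)) * y = x := div_mul_cancel₀ _ (ne_of_gt hyq)
  constructor
  · have h := Int.ceil_lt_add_one ((x:ℚ)/(y:ℚ))
    have h' : (⌈(x:ℚ)/(y:ℚ)⌉ : ℚ) * y - y < x := by nlinarith
    exact_mod_cast h'
  · have h := Int.le_ceil ((x:ℚ)/(y:ℚ))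
    have h' : (x:ℚ) ≤ (⌈(x:ℚ)/(y:ℚ)⌉ : ℚ) * y := by nlinarith
    exact_mod_cast h'

lemma ceil_eq_of (x y q : ℤ) (hy : 0 < y) (h1 : q*y - y < x) (h2 : x ≤ q*y) :
    ⌈(x:ℚ)/(y:ℚ)⌉ = q := by
  have hyq : (0:ℚ) < (y:ℚ) := by exact_mod_cast hy
  have h1' : (q:ℚ)*y - y < x := by exact_mod_cast h1
  have h2' : (x:ℚ) ≤ (q:ℚ)*y := by exact_mod_cast h2
  rw [Int.ceil_eq_iff]
  exact ⟨by rw [lt_div_iff₀ hyq]; linarith, by rw [div_le_iff₀ hyq]; linarith⟩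

lemma mem_Yset_of (n : ℕ) (A : Matrix (Fin 2) (Fin 2) ℤ) (hA : A ∈ Sset n)
    (hb : A 0 1 = 0) : A ∈ Yset n := by
  obtain ⟨h1, h2, h3, h4, h5⟩ := hA
  rw [hb] at h5
  have hn : (n:ℤ) = A 0 0 * A 1 1 := by linarith
  have hpos : (0:ℤ) < A 0 0 := lt_of_le_of_lt h1 h2
  refine ⟨A 0 0, A 1 0, ⟨A 1 1, hn⟩, h1, h2, ?_⟩
  have hdiv : (n:ℤ) / A 0 0 = A 1 1 := by
    rw [hn, Int.mul_ediv_cancel_left _ (ne_of_gt hpos)]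
  rw [hdiv]
  ext i j
  fin_cases i <;> fin_cases j <;> simp [hb]

lemma mem_Xset_of (n : ℕ) (A : Matrix (Fin 2) (Fin 2) ℤ) (hA : A ∈ Sset n)
    (hc : A 1 0 = 0) : A ∈ Xset n := by
  obtain ⟨h1, h2, h3, h4, h5⟩ := hA
  rw [hc] at h5
  have hn : (n:ℤ) = A 0 0 * A 1 1 := by linarith
  have hpos : (0:ℤ) < A 0 0 := by rw [hc] at h2; exact h2
  have hdiv : (n:ℤ) / A 0 0 = A 1 1 := by
    rw [hn, Int.mul_ediv_cancel_left _ (ne_of_gt hpos)]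
  refine ⟨A 0 0, A 0 1, ⟨A 1 1, hn⟩, h3, by rw [hdiv]; exact h4, ?_⟩
  rw [hdiv]
  ext i j
  fin_cases i <;> fin_cases j <;> simp [hc]

lemma Yset_b (n : ℕ) (A : Matrix (Fin 2) (Fin 2) ℤ) (hA : A ∈ Yset n) : A 0 1 = 0 := by
  obtain ⟨c, a, -, -, -, h⟩ := hA; rw [h]; simp

lemma Xset_c (n : ℕ) (A : Matrix (Fin 2) (Fin 2) ℤ) (hA : A ∈ Xset n) : A 1 0 = 0 := by
  obtain ⟨c, a, -, -, -, h⟩ := hA; rw [h]; simp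

lemma Kop_maps (n : ℕ) : ∀ A ∈ Sset n \ Yset n, Kop A ∈ Sset n \ Xset n := by
  rintro A ⟨hS, hY⟩
  obtain ⟨h1, h2, h3, h4, h5⟩ := hS
  have hb : 0 < A 0 1 := by
    rcases lt_or_eq_of_le h3 with h | h
    · exact h
    · exact absurd (mem_Yset_of n A ⟨h1, h2, h3, h4, h5⟩ h.symm) hY
  set q := ⌈(A 1 1 : ℚ) / (A 0 1 : ℚ)⌉ with hq
  obtain ⟨hq1, hq2⟩ := ceil_spec (A 1 1) (A 0 1) hb
  have hq2' : 2 ≤ q := by nlinarith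
  have ha : 0 < A 0 0 := lt_of_le_of_lt h1 h2
  constructor
  · refine ⟨?_, ?_, ?_, ?_, ?_⟩ <;> simp only [Kop, ← hq,
      Matrix.cons_val', Matrix.cons_val_zero, Matrix.cons_val_one, Matrix.head_cons,
      Matrix.empty_val', Matrix.cons_val_fin_one, Matrix.head_fin_const, Matrix.of_apply]
    · exact le_of_lt ha
    · nlinarith
    · linarith
    · linarith
    · ring_nf; linarith [h5]
  · intro hX
    have := Xset_c n (Kop A) hX
    simp only [Kop, Matrix.cons_val', Matrix.cons_val_zero, Matrix.cons_val_one,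
      Matrix.head_cons, Matrix.empty_val', Matrix.cons_val_fin_one, Matrix.head_fin_const,
      Matrix.of_apply] at this
    omega

lemma Kinv_maps (n : ℕ) : ∀ A ∈ Sset n \ Xset n, Kinv A ∈ Sset n \ Yset n := by
  rintro A ⟨hS, hX⟩
  obtain ⟨h1, h2, h3, h4, h5⟩ := hS
  have hc : 0 < A 1 0 := by
    rcases lt_or_eq_of_le h1 with h | h
    · exact h
    · exact absurd (mem_Xset_of n A ⟨h1, h2, h3, h4, h5⟩ h.symm) hX
  set q := ⌈(A 0 0 : ℚ) / (A 1 0 : ℚ)⌉ with hq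
  obtain ⟨hq1, hq2⟩ := ceil_spec (A 0 0) (A 1 0) hc
  have hq2' : 2 ≤ q := by nlinarith
  have hd : 0 < A 1 1 := lt_of_le_of_lt h3 h4
  constructor
  · refine ⟨?_, ?_, ?_, ?_, ?_⟩ <;> simp only [Kinv, ← hq,
      Matrix.cons_val', Matrix.cons_val_zero, Matrix.cons_val_one, Matrix.head_cons,
      Matrix.empty_val', Matrix.cons_val_fin_one, Matrix.head_fin_const, Matrix.of_apply]
    · linarith
    · linarith
    · exact le_of_lt hd
    · nlinarith
    · ring_nf; linarith [h5]
  · intro hY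
    have := Yset_b n (Kinv A) hY
    simp only [Kinv, Matrix.cons_val', Matrix.cons_val_zero, Matrix.cons_val_one,
      Matrix.head_cons, Matrix.empty_val', Matrix.cons_val_fin_one, Matrix.head_fin_const,
      Matrix.of_apply] at this
    omega

lemma Kinv_Kop (n : ℕ) : ∀ A ∈ Sset n \ Yset n, Kinv (Kop A) = A := by
  rintro A ⟨hS, hY⟩
  obtain ⟨h1, h2, h3, h4, h5⟩ := hS
  have hb : 0 < A 0 1 := by
    rcases lt_or_eq_of_le h3 with h | h
    · exact h
    · exact absurd (mem_Yset_of n A ⟨h1, h2, h3, h4, h5⟩ h.symm) hY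
  set q := ⌈(A 1 1 : ℚ) / (A 0 1 : ℚ)⌉ with hq
  have ha : 0 < A 0 0 := lt_of_le_of_lt h1 h2
  have key : ⌈((Kop A) 0 0 : ℚ) / ((Kop A) 1 0 : ℚ)⌉ = q := by
    have e0 : Kop A 0 0 = -A 1 0 + q * A 0 0 := by simp [Kop, ← hq]
    have e1 : Kop A 1 0 = A 0 0 := by simp [Kop]
    rw [e0, e1]
    exact ceil_eq_of _ _ _ ha (by linarith) (by linarith)
  have e : Kinv (Kop A) = !![Kop A 1 0, Kop A 1 1;
      -Kop A 0 0 + q * Kop A 1 0, -Kop A 0 1 + q * Kop A 1 1] := by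
    rw [Kinv, key]
  have f1 : Kop A 1 0 = A 0 0 := by simp [Kop]
  have f2 : Kop A 1 1 = A 0 1 := by simp [Kop]
  have f3 : -Kop A 0 0 + q * Kop A 1 0 = A 1 0 := by simp [Kop, ← hq]
  have f4 : -Kop A 0 1 + q * Kop A 1 1 = A 1 1 := by simp [Kop, ← hq]
  rw [e, f3, f4, f1, f2]
  exact (Matrix.eta_fin_two A).symm

lemma Kop_Kinv (n : ℕ) : ∀ A ∈ Sset n \ Xset n, Kop (Kinv A) = A := by
  rintro A ⟨hS, hX⟩
  obtain ⟨h1, h2, h3, h4, h5⟩ := hS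
  have hc : 0 < A 1 0 := by
    rcases lt_or_eq_of_le h1 with h | h
    · exact h
    · exact absurd (mem_Xset_of n A ⟨h1, h2, h3, h4, h5⟩ h.symm) hX
  set q := ⌈(A 0 0 : ℚ) / (A 1 0 : ℚ)⌉ with hq
  have hd : 0 < A 1 1 := lt_of_le_of_lt h3 h4
  have key : ⌈((Kinv A) 1 1 : ℚ) / ((Kinv A) 0 1 : ℚ)⌉ = q := by
    have e0 : Kinv A 1 1 = -A 0 1 + q * A 1 1 := by simp [Kinv, ← hq]
    have e1 : Kinv A 0 1 = A 1 1 := by simp [Kinv]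
    rw [e0, e1]
    exact ceil_eq_of _ _ _ hd (by linarith) (by linarith)
  have e : Kop (Kinv A) = !![-Kinv A 1 0 + q * Kinv A 0 0,
      -Kinv A 1 1 + q * Kinv A 0 1; Kinv A 0 0, Kinv A 0 1] := by
    rw [Kop, key]
  have f1 : Kinv A 0 0 = A 1 0 := by simp [Kinv]
  have f2 : Kinv A 0 1 = A 1 1 := by simp [Kinv]
  have f3 : -Kinv A 1 0 + q * Kinv A 0 0 = A 0 0 := by simp [Kinv, ← hq]
  have f4 : -Kinv A 1 1 + q * Kinv A 0 1 = A 0 1 := by simp [Kinv, ← hq]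
  rw [e, f3, f4, f1, f2]
  exact (Matrix.eta_fin_two A).symm

/-- For every `n ∈ ℕ`, `K` is a well-defined bijection from `S_n ∖ Y_n` onto
`S_n ∖ X_n`, with inverse given by `Kinv`. -/
theorem Kop_bijOn_and_inverse (n : ℕ) :
    Set.BijOn Kop (Sset n \ Yset n) (Sset n \ Xset n) ∧
    (∀ A ∈ Sset n \ Yset n, Kinv (Kop A) = A) ∧
    (∀ A ∈ Sset n \ Xset n, Kop (Kinv A) = A) := by
  refine ⟨Set.InvOn.bijOn ⟨Kinv_Kop n, Kop_Kinv n⟩ (Kop_maps n) (Kinv_maps n),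
    Kinv_Kop n, Kop_Kinv n⟩
end

section
/- Let P_x = (x_0, x_1, …, x_k) be the minimal partition of x ∈ ℚ⁺, and write x_j = p'_j/q'_j with gcd(p'_j, q'_j) = 1 and q'_j ≥ 0. Then: (i) x < (p'_{j−1} − p'_j)/(q'_{j−1} − q'_j) for all j = 1, 2, …, k; and (ii) ⌈(x q'_{j+1} − p'_{j+1})/(x q'_j − p'_j)⌉ = p'_{j−1} q'_{j+1} − p'_{j+1} q'_{j−1} for all j = 1, 2, …, k−1. -/
/-!
Put `L j = x q_j - p_j`. Two consecutive unimodular steps force the three-term relation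
`v_{j+1} = a_j v_j - v_{j-1}` with `a_j = p_{j-1} q_{j+1} - p_{j+1} q_{j-1}` for the vectors
`v_j = (p_j, q_j)`, hence for `L`; minimality (`q` strictly decreasing, nonnegative) gives
`a_j ≥ 2`. Since `L 0 = 0 < L 1`, the relation makes `L` strictly increasing, which is (i).
Then `L_{j+1} / L_j = a_j - L_{j-1} / L_j` with `0 ≤ L_{j-1} / L_j < 1`, which is (ii).
-/

theorem linearForm_three_term {R : Type*} [CommRing R] {p q : ℕ → ℤ} {i : ℕ} (x : R)
    (h₀ : p i * q (i + 1) - p (i + 1) * q i = 1)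
    (h₁ : p (i + 1) * q (i + 2) - p (i + 2) * q (i + 1) = 1) :
    x * q (i + 2) - p (i + 2) =
      ((p i * q (i + 2) - p (i + 2) * q i : ℤ) : R) * (x * q (i + 1) - p (i + 1))
        - (x * q i - p i) := by
  have h₀' := congrArg (Int.cast : ℤ → R) h₀
  have h₁' := congrArg (Int.cast : ℤ → R) h₁
  push_cast at h₀' h₁' ⊢
  linear_combination -(x * q (i + 2) - p (i + 2)) * h₀' - (x * q i - p i) * h₁'

theorem two_le_det_of_unimodular_of_lt {p q : ℕ → ℤ} {i : ℕ}
    (h₀ : p i * q (i + 1) - p (i + 1) * q i = 1)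
    (h₁ : p (i + 1) * q (i + 2) - p (i + 2) * q (i + 1) = 1)
    (hq₀ : q (i + 1) < q i) (hq₁ : q (i + 2) < q (i + 1)) (hq₂ : 0 ≤ q (i + 2)) :
    2 ≤ p i * q (i + 2) - p (i + 2) * q i := by
  have hmul : q (i + 1) * (p i * q (i + 2) - p (i + 2) * q i) = q i + q (i + 2) := by
    linear_combination q (i + 2) * h₀ + q i * h₁
  nlinarith

theorem nonneg_and_lt_succ_of_three_term {R : Type*} [CommRing R] [LinearOrder R]
    [IsStrictOrderedRing R] {L a : ℕ → R} {k : ℕ} (hL₀ : 0 ≤ L 0) (hL₁ : L 0 < L 1)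
    (ha : ∀ i, i + 2 ≤ k → 2 ≤ a i)
    (hrec : ∀ i, i + 2 ≤ k → L (i + 2) = a i * L (i + 1) - L i) :
    ∀ j, j + 1 ≤ k → 0 ≤ L j ∧ L j < L (j + 1)
  | 0, _ => ⟨hL₀, hL₁⟩
  | i + 1, hi => by
    obtain ⟨hLi, hlt⟩ := nonneg_and_lt_succ_of_three_term hL₀ hL₁ ha hrec i (by omega)
    have hLi₁ : 0 ≤ L (i + 1) := hLi.trans hlt.le
    have hgap : 0 ≤ (a i - 2) * L (i + 1) := mul_nonneg (by linarith [ha i hi]) hLi₁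
    refine ⟨hLi₁, ?_⟩
    rw [hrec i hi]
    linarith

theorem Int.ceil_intCast_mul_sub_div {K : Type*} [Field K] [LinearOrder K]
    [IsStrictOrderedRing K] [FloorRing K] (n : ℤ) {u v : K} (hu : 0 ≤ u) (huv : u < v) :
    ⌈(n * v - u) / v⌉ = n := by
  have hv : 0 < v := hu.trans_lt huv
  rw [Int.ceil_eq_iff, lt_div_iff₀ hv, div_le_iff₀ hv]
  constructor <;> linarith

theorem lt_div_sub_of_sub_lt {K : Type*} [Field K] [LinearOrder K] [IsStrictOrderedRing K]
    {x p₀ q₀ p₁ q₁ : K} (hq : q₁ < q₀) (h : x * q₀ - p₀ < x * q₁ - p₁) :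
    x < (p₀ - p₁) / (q₀ - q₁) := by
  rw [lt_div_iff₀ (sub_pos.2 hq)]
  linarith

theorem mul_sub_eq_det_of_div_eq {K : Type*} [Field K] {x : K} {p₀ q₀ : ℤ}
    (hq₀ : (q₀ : K) ≠ 0) (hx : (p₀ : K) / q₀ = x) (p' q' : ℤ) :
    (q₀ : K) * (x * q' - p') = ((p₀ * q' - p' * q₀ : ℤ) : K) := by
  rw [← hx]
  field_simp
  push_cast
  ring

theorem minimal_partition_ceil_lemma_general (x : ℚ) (k : ℕ)
    (p q : ℕ → ℤ)
    (hqnn : ∀ j ≤ k, 0 ≤ q j)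
    (hx0 : (p 0 : ℚ) / (q 0 : ℚ) = x) (hq0 : 0 < q 0)
    (hdet : ∀ j < k, p j * q (j + 1) - p (j + 1) * q j = 1)
    (hdec : ∀ j < k, q (j + 1) < q j) :
    (∀ j, 0 < j → j ≤ k →
      x < ((p (j - 1) - p j : ℤ) : ℚ) / ((q (j - 1) - q j : ℤ) : ℚ)) ∧
    (∀ j, 0 < j → j + 1 ≤ k →
      (⌈(x * (q (j + 1) : ℚ) - (p (j + 1) : ℚ)) / (x * (q j : ℚ) - (p j : ℚ))⌉ : ℤ)
        = p (j - 1) * q (j + 1) - p (j + 1) * q (j - 1)) := by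
  set L : ℕ → ℚ := fun j => x * q j - p j
  set a : ℕ → ℤ := fun i => p i * q (i + 2) - p (i + 2) * q i
  have hq0' : (q 0 : ℚ) ≠ 0 := by exact_mod_cast hq0.ne'
  have hrec : ∀ i, i + 2 ≤ k → L (i + 2) = a i * L (i + 1) - L i := fun i hi =>
    linearForm_three_term x (hdet i (by omega)) (hdet (i + 1) (by omega))
  have htwo : ∀ i, i + 2 ≤ k → (2 : ℚ) ≤ a i := fun i hi => by
    exact_mod_cast two_le_det_of_unimodular_of_lt (hdet i (by omega)) (hdet (i + 1) (by omega))
      (hdec i (by omega)) (hdec (i + 1) (by omega)) (hqnn (i + 2) hi)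
  have hL0 : L 0 = 0 := by simpa [hq0'] using mul_sub_eq_det_of_div_eq hq0' hx0 (p 0) (q 0)
  have hmono : ∀ j, j + 1 ≤ k → 0 ≤ L j ∧ L j < L (j + 1) := fun j hj => by
    have hL1 : (q 0 : ℚ) * L 1 = 1 := by
      simpa [hdet 0 (by omega)] using mul_sub_eq_det_of_div_eq hq0' hx0 (p 1) (q 1)
    have hL1_pos : 0 < L 1 := pos_of_mul_pos_right (hL1 ▸ one_pos) (by exact_mod_cast hq0.le)
    exact nonneg_and_lt_succ_of_three_term hL0.ge (hL0 ▸ hL1_pos) htwo hrec j hj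
  refine ⟨fun j hj hjk => ?_, fun j hj hjk => ?_⟩ <;>
    obtain ⟨i, rfl⟩ : ∃ i, j = i + 1 := ⟨j - 1, by omega⟩ <;> rw [Nat.add_sub_cancel]
  · push_cast
    exact lt_div_sub_of_sub_lt (by exact_mod_cast hdec i hjk) (hmono i hjk).2
  · obtain ⟨hLi, hlt⟩ := hmono i (by omega)
    change ⌈L (i + 2) / L (i + 1)⌉ = a i
    rw [hrec i hjk]
    exact Int.ceil_intCast_mul_sub_div (a i) hLi hlt

/-- Lemma 2.8: for the minimal partition `(x_0, …, x_k)` of `x ∈ ℚ⁺`, written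
`x_j = p_j / q_j` with `gcd(p_j, q_j) = 1` and `q_j ≥ 0` (and `x_k = −∞ = −1/0`):
(i) `x < (p_{j−1} − p_j)/(q_{j−1} − q_j)` for `j = 1, …, k`;
(ii) `⌈(x q_{j+1} − p_{j+1})/(x q_j − p_j)⌉ = p_{j−1} q_{j+1} − p_{j+1} q_{j−1}`
for `j = 1, …, k−1`. -/
theorem minimal_partition_ceil_lemma (x : ℚ) (hx : 0 < x) (k : ℕ)
    (p q : ℕ → ℤ)
    (hcop : ∀ j ≤ k, Int.gcd (p j) (q j) = 1)
    (hqnn : ∀ j ≤ k, 0 ≤ q j)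
    (hx0 : (p 0 : ℚ) / (q 0 : ℚ) = x) (hq0 : 0 < q 0)
    (hdet : ∀ j < k, p j * q (j + 1) - p (j + 1) * q j = 1)
    (hdec : ∀ j < k, q (j + 1) < q j)
    (hpk : p k = -1) (hqk : q k = 0) :
    (∀ j, 0 < j → j ≤ k →
      x < ((p (j - 1) - p j : ℤ) : ℚ) / ((q (j - 1) - q j : ℤ) : ℚ)) ∧
    (∀ j, 0 < j → j + 1 ≤ k →
      (⌈(x * (q (j + 1) : ℚ) - (p (j + 1) : ℚ)) / (x * (q j : ℚ) - (p j : ℚ))⌉ : ℤ)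
        = p (j - 1) * q (j + 1) - p (j + 1) * q (j - 1)) :=
  minimal_partition_ceil_lemma_general x k p q hqnn hx0 hq0 hdet hdec
end

section
/- Let n ∈ ℕ and let c, c', i be nonnegative integers with c, c' ≥ 1, c | n, c' | n, gcd(c, c') = 1 and gcd(i, n) = 1. Then the matrix X := ((c·î − c')_{n/c'} + c', c'; n/c', 0) · (c, (c'·i)_{n/c}; 0, n/c)⁻¹ has integer entries and determinant −1, i.e. X ∈ GL(2, ℤ). -/
/-- Lemma 2.9 (i): for `c, c' ≥ 1` dividing `n` with `gcd(c, c') = 1` and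
`gcd(i, n) = 1`, with `î ∈ {1, …, n−1}` the inverse of `i` mod `n`, the matrix
`X = ((c î − c')_{n/c'} + c', c'; n/c', 0) · (c, (c' i)_{n/c}; 0, n/c)⁻¹`
(inverse taken in `GL(2, ℚ)`) has integer entries and determinant `−1`, i.e.
`X ∈ GL(2, ℤ)`.  Here `(r)_m` is the representative of `r mod m` in
`{0, …, m−1}`, which for `m > 0` is `r % m` on `ℤ`. -/
theorem X_matrix_integral_det_neg_one (n : ℕ) (hn : 0 < n)
    (c c' i ihat : ℤ)
    (hc : 1 ≤ c) (hc' : 1 ≤ c') (hi : 0 ≤ i)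
    (hcn : c ∣ (n : ℤ)) (hc'n : c' ∣ (n : ℤ))
    (hcc' : Int.gcd c c' = 1) (hin : Int.gcd i (n : ℤ) = 1)
    (hihat1 : 1 ≤ ihat) (hihat2 : ihat ≤ (n : ℤ) - 1)
    (hinv : (n : ℤ) ∣ (i * ihat - 1)) :
    ∃ Y : Matrix (Fin 2) (Fin 2) ℤ,
      ((!![(((c * ihat - c') % ((n : ℤ) / c') + c' : ℤ) : ℚ), (c' : ℚ);
           (((n : ℤ) / c' : ℤ) : ℚ), 0]) *
        (!![(c : ℚ), (((c' * i) % ((n : ℤ) / c) : ℤ) : ℚ);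
            0, (((n : ℤ) / c : ℤ) : ℚ)])⁻¹) = Y.map (fun t => (t : ℚ)) ∧
      Y.det = -1 := by
  have hc0 : c ≠ 0 := by omega
  have hc'0 : c' ≠ 0 := by omega
  have hn0 : (n : ℤ) ≠ 0 := by exact_mod_cast hn.ne'
  set m : ℤ := (n : ℤ) / c with hm_def
  set m' : ℤ := (n : ℤ) / c' with hm'_def
  have hcm : c * m = n := Int.mul_ediv_cancel' hcn
  have hc'm' : c' * m' = n := Int.mul_ediv_cancel' hc'n
  have hcop : IsCoprime c c' := Int.isCoprime_iff_gcd_eq_one.mpr hcc'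
  have hcc'n : c * c' ∣ (n : ℤ) := hcop.mul_dvd hcn hc'n
  -- c ∣ m'
  have hc_m' : c ∣ m' := by
    have h1 : c' * c ∣ c' * m' := by rw [hc'm']; rwa [mul_comm c' c]
    exact (mul_dvd_mul_iff_left hc'0).mp h1
  have hc'_m : c' ∣ m := by
    have h1 : c * c' ∣ c * m := by rw [hcm]; exact hcc'n
    exact (mul_dvd_mul_iff_left hc0).mp h1
  have hnmm' : (n : ℤ) ∣ m * m' := by
    obtain ⟨k, hk⟩ := hc'_m
    exact ⟨k, by rw [hk]; rw [← hc'm']; ring⟩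
  set a : ℤ := (c * ihat - c') % m' + c' with ha_def
  set b : ℤ := (c' * i) % m with hb_def
  set q : ℤ := (c * ihat - c') / m' with hq_def
  set l : ℤ := (c' * i) / m with hl_def
  have ha : a = c * ihat - m' * q := by
    rw [ha_def, Int.emod_def, hq_def]; ring
  have hb : b = c' * i - m * l := by
    rw [hb_def, Int.emod_def, hl_def]
  have hca : c ∣ a := by
    rw [ha]
    exact dvd_sub (Dvd.intro _ rfl) (Dvd.dvd.mul_right hc_m' q)
  have hnab : (n : ℤ) ∣ c * c' - a * b := by
    have key : c * c' - a * b =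
        -((c * c') * (i * ihat - 1)) + (c * m) * (ihat * l) + (c' * m') * (q * i)
          - (m * m') * (q * l) := by
      rw [ha, hb]; ring
    rw [key]
    refine dvd_sub (dvd_add (dvd_add (dvd_neg.mpr ?_) ?_) ?_) ?_
    · exact Dvd.dvd.mul_left hinv (c * c')
    · rw [hcm]; exact Dvd.intro _ rfl
    · rw [hc'm']; exact Dvd.intro _ rfl
    · exact Dvd.dvd.mul_right hnmm' _
  have hnm'b : (n : ℤ) ∣ m' * b := by
    have key : m' * b = (c' * m') * i - (m * m') * l := by rw [hb]; ring
    rw [key]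
    refine dvd_sub ?_ (Dvd.dvd.mul_right hnmm' _)
    rw [hc'm']; exact Dvd.intro _ rfl
  obtain ⟨a₀, ha₀⟩ := hca
  obtain ⟨u, hu⟩ := hc_m'
  obtain ⟨w, hw⟩ := hnab
  obtain ⟨v, hv⟩ := hnm'b
  -- the integer matrix
  refine ⟨!![a₀, w; u, -v], ?_, ?_⟩
  · -- matrix identity
    have hBA : (!![a₀, w; u, -v] : Matrix (Fin 2) (Fin 2) ℤ) * !![c, b; 0, m]
        = !![a, c'; m', 0] := by
      have e01 : a₀ * b + w * m = c' := by
        have : c * (a₀ * b + w * m) = c * c' := by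
          have hcmn : c * m = n := hcm
          calc c * (a₀ * b + w * m) = (c * a₀) * b + w * (c * m) := by ring
            _ = a * b + w * (n : ℤ) := by rw [← ha₀, hcmn]
            _ = a * b + (c * c' - a * b) := by rw [hw]; ring
            _ = c * c' := by ring
        exact mul_left_cancel₀ hc0 this
      have e11 : u * b + -(v * m) = 0 := by
        have : c * (u * b + -(v * m)) = c * 0 := by
          calc c * (u * b + -(v * m)) = (c * u) * b - v * (c * m) := by ring
            _ = m' * b - v * (n : ℤ) := by rw [← hu, hcm]
            _ = (n : ℤ) * v - v * (n : ℤ) := by rw [← hv]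
            _ = c * 0 := by ring
        exact mul_left_cancel₀ hc0 this
      ext x y
      fin_cases x <;> fin_cases y <;>
        simp [Matrix.mul_apply, Fin.sum_univ_two]
      · rw [mul_comm]; exact ha₀.symm
      · exact e01
      · rw [mul_comm]; exact hu.symm
      · exact e11
    -- cast to ℚ
    have hBAQ : ((!![a₀, w; u, -v] : Matrix (Fin 2) (Fin 2) ℤ).map
          (fun t => (t : ℚ))) *
        !![(c : ℚ), ((b : ℤ) : ℚ); 0, ((m : ℤ) : ℚ)]
        = !![((a : ℤ) : ℚ), (c' : ℚ); ((m' : ℤ) : ℚ), 0] := by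
      have := congrArg (Matrix.map · (fun t : ℤ => (t : ℚ))) hBA
      simp only [show (fun t : ℤ => (t : ℚ)) = ⇑(Int.castRingHom ℚ) from rfl] at this
      rw [Matrix.map_mul] at this
      convert this using 2 <;>
        · ext x y; fin_cases x <;> fin_cases y <;> simp
    have hdetB : (!![(c : ℚ), ((b : ℤ) : ℚ); 0, ((m : ℤ) : ℚ)]).det ≠ 0 := by
      have : (!![(c : ℚ), ((b : ℤ) : ℚ); 0, ((m : ℤ) : ℚ)]).det
          = ((c * m : ℤ) : ℚ) := by
        simp [Matrix.det_fin_two_of]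
      rw [this, hcm]
      exact_mod_cast hn0
    have hinvB := Matrix.mul_nonsing_inv _ (isUnit_iff_ne_zero.mpr hdetB)
    calc (!![((a : ℤ) : ℚ), (c' : ℚ); ((m' : ℤ) : ℚ), 0]) *
          (!![(c : ℚ), ((b : ℤ) : ℚ); 0, ((m : ℤ) : ℚ)])⁻¹
        = ((!![a₀, w; u, -v] : Matrix (Fin 2) (Fin 2) ℤ).map (fun t => (t : ℚ)))
            * (!![(c : ℚ), ((b : ℤ) : ℚ); 0, ((m : ℤ) : ℚ)] *
              (!![(c : ℚ), ((b : ℤ) : ℚ); 0, ((m : ℤ) : ℚ)])⁻¹) := by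
          rw [← Matrix.mul_assoc, hBAQ]
      _ = _ := by rw [hinvB, Matrix.mul_one]
  · -- determinant
    have hdet : (!![a₀, w; u, -v] : Matrix (Fin 2) (Fin 2) ℤ).det * (n : ℤ)
        = -(n : ℤ) := by
      have h1 : ((!![a₀, w; u, -v] : Matrix (Fin 2) (Fin 2) ℤ)
          * !![c, b; 0, m]).det = (!![a, c'; m', 0] : Matrix (Fin 2) (Fin 2) ℤ).det := by
        congr 1
        have e01 : a₀ * b + w * m = c' := by
          have : c * (a₀ * b + w * m) = c * c' := by
            calc c * (a₀ * b + w * m) = (c * a₀) * b + w * (c * m) := by ring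
              _ = a * b + w * (n : ℤ) := by rw [← ha₀, hcm]
              _ = a * b + (c * c' - a * b) := by rw [hw]; ring
              _ = c * c' := by ring
          exact mul_left_cancel₀ hc0 this
        have e11 : u * b + -(v * m) = 0 := by
          have : c * (u * b + -(v * m)) = c * 0 := by
            calc c * (u * b + -(v * m)) = (c * u) * b - v * (c * m) := by ring
              _ = m' * b - v * (n : ℤ) := by rw [← hu, hcm]
              _ = (n : ℤ) * v - v * (n : ℤ) := by rw [← hv]
              _ = c * 0 := by ring
          exact mul_left_cancel₀ hc0 this
        ext x y
        fin_cases x <;> fin_cases y <;>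
          simp [Matrix.mul_apply, Fin.sum_univ_two]
        · rw [mul_comm]; exact ha₀.symm
        · exact e01
        · rw [mul_comm]; exact hu.symm
        · exact e11
      rw [Matrix.det_mul] at h1
      have hdB : (!![c, b; 0, m] : Matrix (Fin 2) (Fin 2) ℤ).det = (n : ℤ) := by
        simp [Matrix.det_fin_two_of, hcm]
      have hdA : (!![a, c'; m', 0] : Matrix (Fin 2) (Fin 2) ℤ).det = -(n : ℤ) := by
        simp [Matrix.det_fin_two_of]
        exact hc'm'
      rw [hdB, hdA] at h1
      exact h1
    have := mul_right_cancel₀ hn0 (by rw [hdet]; ring :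
      (!![a₀, w; u, -v] : Matrix (Fin 2) (Fin 2) ℤ).det * (n : ℤ) = (-1) * (n : ℤ))
    exact this
end

section
/- Fix s ∈ ℂ. Let r ∈ ℝ, let φ be holomorphic on ℂ ∖ (−∞, r], and let R = (a, b; c, d) be a 2×2 integer matrix with nonzero determinant such that c > 0 or (c = 0 and a, d > 0), and such that a − c·r > 0. Then the function (φ|_s R)(z) := |det R|^s (cz + d)^{−2s} φ((az + b)/(cz + d)) is well defined and holomorphic on ℂ ∖ (−∞, r'], where r' = max{(dr − b)/(a − cr), −d/c}, with −d/c interpreted as −∞ when c = 0. -/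
/-!
For `z` off the cut `(−∞, r']`, the denominator `cz + d` lies in the slit plane, so its
principal power is holomorphic at `z`, and the Möbius image `w = (az + b)/(cz + d)` lies off
`(−∞, r]`, so `φ` is holomorphic at `w`. Off the real axis both follow from
`Im w = (ad − bc) Im z / |cz + d|²` and `Im (cz + d) = c Im z`; on the real axis `x > r'`
is exactly what makes `cx + d > 0` and `(ax + b)/(cx + d) > r`.
-/

/-- The cut `(−∞, r]` on the real axis, as a subset of `ℂ`. -/
def cut (r : ℝ) : Set ℂ := {z | z.re ≤ r ∧ z.im = 0}

/-- The slash operator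
`(φ|ₛ(a,b;c,d))(z) = |ad − bc|^s (cz + d)^{−2s} φ((az + b)/(cz + d))`,
using the principal branches of powers (holomorphic on `ℂ ∖ (−∞, 0]`). -/
noncomputable def slash (s : ℂ) (a b c d : ℤ) (φ : ℂ → ℂ) (z : ℂ) : ℂ :=
  ((|a * d - b * c| : ℤ) : ℂ) ^ s * ((c : ℂ) * z + (d : ℂ)) ^ (-(2 * s)) *
    φ (((a : ℂ) * z + (b : ℂ)) / ((c : ℂ) * z + (d : ℂ)))

open Complex

/-- The endpoint `r'` of the cut, for a real matrix `(a, b; c, d)`. -/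
noncomputable def slashCut (r a b c d : ℝ) : ℝ :=
  if c = 0 then (d * r - b) / a else max ((d * r - b) / (a - c * r)) (-d / c)

lemma notMem_cut_iff {r : ℝ} {z : ℂ} : z ∉ cut r ↔ z.im ≠ 0 ∨ r < z.re := by
  simp only [cut, Set.mem_ofPred_eq, not_and_or, not_le]
  exact or_comm

lemma isOpen_compl_cut (r : ℝ) : IsOpen (cut r)ᶜ :=
  ((isClosed_le continuous_re continuous_const).inter
    (isClosed_eq continuous_im continuous_const)).isOpen_compl

lemma im_mobius (a b c d : ℝ) (z : ℂ) :
    ((a * z + b) / (c * z + d)).im = (a * d - b * c) * z.im / normSq (c * z + d) := by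
  rw [div_im]
  simp only [add_re, add_im, mul_re, mul_im, ofReal_re, ofReal_im]
  ring

section RealCoefficients

variable {r a b c d x : ℝ}

lemma linear_pos_of_slashCut_lt (hG : 0 < c ∨ (c = 0 ∧ 0 < a ∧ 0 < d))
    (hx : slashCut r a b c d < x) : 0 < c * x + d := by
  rcases hG with hc | ⟨rfl, -, hd⟩
  · rw [slashCut, if_neg hc.ne'] at hx
    have := (div_lt_iff₀ hc).mp ((le_max_right _ _).trans_lt hx)
    linarith
  · simpa using hd

lemma lt_mobius_of_slashCut_lt (hG : 0 < c ∨ (c = 0 ∧ 0 < a ∧ 0 < d)) (har : c * r < a)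
    (hx : slashCut r a b c d < x) : r < (a * x + b) / (c * x + d) := by
  rw [lt_div_iff₀ (linear_pos_of_slashCut_lt hG hx)]
  rcases hG with hc | ⟨rfl, ha, -⟩
  · rw [slashCut, if_neg hc.ne'] at hx
    have := (div_lt_iff₀ (sub_pos.mpr har)).mp ((le_max_left _ _).trans_lt hx)
    linarith
  · rw [slashCut, if_pos rfl] at hx
    have := (div_lt_iff₀ ha).mp hx
    linarith

variable {z : ℂ}

lemma linear_mem_slitPlane (hG : 0 < c ∨ (c = 0 ∧ 0 < a ∧ 0 < d))
    (hz : z ∉ cut (slashCut r a b c d)) : (c : ℂ) * z + d ∈ slitPlane := by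
  rw [mem_slitPlane_iff]
  simp only [add_re, add_im, mul_re, mul_im, ofReal_re, ofReal_im, zero_mul, sub_zero,
    add_zero]
  rcases notMem_cut_iff.mp hz with hy | hx
  · rcases hG with hc | ⟨rfl, -, hd⟩
    · exact Or.inr (mul_ne_zero hc.ne' hy)
    · simpa using hd
  · exact Or.inl (linear_pos_of_slashCut_lt hG hx)

lemma mobius_notMem_cut (hdet : a * d - b * c ≠ 0) (hG : 0 < c ∨ (c = 0 ∧ 0 < a ∧ 0 < d))
    (har : c * r < a) (hz : z ∉ cut (slashCut r a b c d)) :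
    (a * z + b) / (c * z + d) ∉ cut r := by
  rw [notMem_cut_iff]
  by_cases hy : z.im = 0
  · have hx : slashCut r a b c d < z.re :=
      (notMem_cut_iff.mp hz).resolve_left (not_not.mpr hy)
    have hz_real : z = (z.re : ℂ) := ext rfl hy
    right
    rw [hz_real, ← ofReal_mul, ← ofReal_add, ← ofReal_mul, ← ofReal_add, ← ofReal_div,
      ofReal_re]
    exact lt_mobius_of_slashCut_lt hG har hx
  · left
    have hD := normSq_pos.mpr (slitPlane_ne_zero (linear_mem_slitPlane hG hz))
    rw [im_mobius]
    exact div_ne_zero (mul_ne_zero hdet hy) hD.ne'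

end RealCoefficients

/-- Proposition 3.2: if `φ` is holomorphic on `ℂ ∖ (−∞, r]`, the matrix
`R = (a, b; c, d)` has nonzero determinant, `c > 0` or (`c = 0` and `a, d > 0`),
and `a − c r > 0`, then `φ|ₛR` is holomorphic on `ℂ ∖ (−∞, r']` with
`r' = max {(dr − b)/(a − cr), −d/c}` (where `−d/c` is interpreted as `−∞`,
i.e. dropped, when `c = 0`). -/
theorem slash_differentiableOn (s : ℂ) (r : ℝ) (φ : ℂ → ℂ) (a b c d : ℤ)
    (hφ : DifferentiableOn ℂ φ (cut r)ᶜ)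
    (hdet : a * d - b * c ≠ 0)
    (hG : 0 < c ∨ (c = 0 ∧ 0 < a ∧ 0 < d))
    (har : (c : ℝ) * r < (a : ℝ)) :
    DifferentiableOn ℂ (slash s a b c d φ)
      (cut (if c = 0 then ((d : ℝ) * r - (b : ℝ)) / (a : ℝ)
        else max (((d : ℝ) * r - (b : ℝ)) / ((a : ℝ) - (c : ℝ) * r))
          (-(d : ℝ) / (c : ℝ))))ᶜ := by
  intro z hz
  have hz : z ∉ cut (slashCut r a b c d) := by
    simpa only [slashCut, Int.cast_eq_zero, Set.mem_compl_iff] using hz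
  have hG : (0 : ℝ) < c ∨ ((c : ℝ) = 0 ∧ (0 : ℝ) < a ∧ (0 : ℝ) < d) := by exact_mod_cast hG
  have hdet : (a * d - b * c : ℝ) ≠ 0 := by exact_mod_cast hdet
  have hD : (c : ℂ) * z + d ∈ slitPlane := by simpa using linear_mem_slitPlane hG hz
  have hw : ((a : ℂ) * z + b) / (c * z + d) ∉ cut r := by
    simpa using mobius_notMem_cut hdet hG har hz
  have hφw := hφ.differentiableAt ((isOpen_compl_cut r).mem_nhds hw)
  have hmobius : DifferentiableAt ℂ (fun z : ℂ ↦ ((a : ℂ) * z + b) / (c * z + d)) z :=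
    DifferentiableAt.div (by fun_prop) (by fun_prop) (slitPlane_ne_zero hD)
  have hpow : DifferentiableAt ℂ (fun z : ℂ ↦ ((c : ℂ) * z + d) ^ (-(2 * s))) z :=
    DifferentiableAt.cpow (by fun_prop) (differentiableAt_const _) hD
  exact (((differentiableAt_const _).mul hpow).mul (hφw.comp z hmobius)).differentiableWithinAt
end

section
/- Let n ≥ 1 and let P_n = {(c, b) : c ≥ 1, c | n, 0 ≤ b < n/c, (c, b) n-admissible}. The map (c, b) ↦ [c : d(c, b)] is a bijection from P_n onto I_n. -/
/-- The equivalence relation `∼_n` on `ℤ × ℤ`: `(x, y) ∼_n (x', y')` iff there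
is `k ∈ ℤ` with `gcd(k, n) = 1`, `k x ≡ x' (mod n)` and `k y ≡ y' (mod n)`. -/
def relN (n : ℕ) (u v : ℤ × ℤ) : Prop :=
  ∃ k : ℤ, Int.gcd k (n : ℤ) = 1 ∧
    (n : ℤ) ∣ (k * u.1 - v.1) ∧ (n : ℤ) ∣ (k * u.2 - v.2)

/-- A pair `(c, b)` with `c ≥ 1`, `c ∣ n`, `0 ≤ b < n/c` is `n`-admissible if
there is `k ∈ {0, …, c−1}` with `gcd(c, b + k·(n/c)) = 1`. -/
def nAdm (n c b : ℕ) : Prop :=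
  1 ≤ c ∧ c ∣ n ∧ b < n / c ∧ ∃ k < c, Nat.gcd c (b + k * (n / c)) = 1

/-- `d(c, b) = min {c + b + k·(n/c) : k ∈ {0, …, c−1}, gcd(c, b + k·(n/c)) = 1}`. -/
noncomputable def dcb (n c b : ℕ) : ℕ :=
  sInf {e : ℕ | ∃ k < c, Nat.gcd c (b + k * (n / c)) = 1 ∧ e = c + b + k * (n / c)}

/-!
The class of `(x, y)` determines `c = gcd(x, n)`, and multiplying by a unit `k` with
`k x ≡ c (mod n)` normalises the first coordinate. The units fixing `c` are those `≡ 1` modulo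
`m = n / c`, and they act transitively on the second coordinates coprime to `c` with a given
residue modulo `m`. So a class with first coordinate `c` is determined by a residue `b` modulo
`m`, and `d(c, b) ≡ c + b (mod m)` is a second coordinate coprime to `c` in it.
-/

theorem Int.ModEq.gcd_eq {a b n : ℤ} (h : a ≡ b [ZMOD n]) : Int.gcd a n = Int.gcd b n := by
  rw [← Int.gcd_emod, h, Int.gcd_emod]

theorem Int.ModEq.isCoprime_iff {a b n : ℤ} (h : a ≡ b [ZMOD n]) :
    IsCoprime a n ↔ IsCoprime b n := by
  simp only [Int.isCoprime_iff_gcd_eq_one, h.gcd_eq]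

theorem Int.gcd_mul_left_cancel_of_isCoprime {k n : ℤ} (a : ℤ) (h : IsCoprime k n) :
    Int.gcd (k * a) n = Int.gcd a n := by
  rw [Int.gcd_def, Int.natAbs_mul,
    Nat.Coprime.gcd_mul_left_cancel _ (Int.isCoprime_iff_gcd_eq_one.mp h), ← Int.gcd_def]

theorem exists_isCoprime_modEq_of_dvd {m n : ℕ} [NeZero n] (hmn : m ∣ n) {a : ℤ}
    (ha : IsCoprime a m) : ∃ k : ℤ, IsCoprime k n ∧ k ≡ a [ZMOD m] := by
  obtain ⟨v, hv⟩ := ZMod.unitsMap_surjective hmn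
    ((ZMod.coe_int_isUnit_iff_isCoprime a m).mpr ha.symm).unit
  refine ⟨ZMod.cast (v : ZMod n), ?_, ?_⟩
  · rw [isCoprime_comm, ← ZMod.coe_int_isUnit_iff_isCoprime, ZMod.intCast_cast, ZMod.cast_id',
      id]
    exact v.isUnit
  · rw [← ZMod.intCast_eq_intCast_iff, ZMod.intCast_cast, ← ZMod.unitsMap_val hmn, hv,
      IsUnit.unit_spec]

theorem exists_isCoprime_mul_modEq_gcd {n : ℕ} [NeZero n] (x : ℤ) :
    ∃ k : ℤ, IsCoprime k n ∧ k * x ≡ Int.gcd x n [ZMOD n] := by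
  set c := Int.gcd x n
  have hc : 0 < c := Int.gcd_pos_of_ne_zero_right _ (by exact_mod_cast NeZero.ne n)
  have hcn : c ∣ n := by exact_mod_cast Int.gcd_dvd_right x n
  have hx : x = c * (x / c) := (Int.mul_ediv_cancel' (Int.gcd_dvd_left x n)).symm
  have hn : (n : ℤ) = c * (n / c : ℕ) := by exact_mod_cast (Nat.mul_div_cancel' hcn).symm
  have hcop : IsCoprime (x / c) (n / c : ℕ) := by
    rw [Int.isCoprime_iff_gcd_eq_one, Int.natCast_div]
    exact Int.gcd_div_gcd_div_gcd hc
  obtain ⟨u, v, huv⟩ := hcop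
  obtain ⟨k, hk, hku⟩ := exists_isCoprime_modEq_of_dvd (Nat.div_dvd_of_dvd hcn)
    (a := u) ⟨x / c, v, by linear_combination huv⟩
  have hinv : k * (x / c) ≡ 1 [ZMOD (n / c : ℕ)] :=
    calc k * (x / c) ≡ u * (x / c) [ZMOD (n / c : ℕ)] := hku.mul_right _
      _ ≡ 1 [ZMOD (n / c : ℕ)] := Int.modEq_iff_dvd.mpr ⟨v, by linear_combination -huv⟩
  refine ⟨k, hk, ?_⟩
  have := hinv.mul_left' (c := (c : ℤ))
  rwa [mul_one, mul_left_comm, ← hx, ← hn] at this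

theorem exists_isCoprime_modEq_one_mul_modEq {c m e d : ℤ} (he : IsCoprime e c)
    (hd : IsCoprime d c) (hde : d ≡ e [ZMOD m]) :
    ∃ k : ℤ, IsCoprime k (c * m) ∧ k ≡ 1 [ZMOD m] ∧ k * e ≡ d [ZMOD c * m] := by
  obtain ⟨w, hw⟩ := hde.symm.dvd
  obtain ⟨u, v, huv⟩ := he
  -- `u` inverts `e` modulo `c`, so adding `w u m · e ≡ w m = d - e` moves `e` to `d` mod `c m`
  set k := 1 + w * u * m
  have hke : k * e ≡ d [ZMOD c * m] :=
    Int.modEq_iff_dvd.mpr ⟨w * v, by linear_combination (-w * m) * huv + hw⟩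
  have hkc : IsCoprime k c :=
    IsCoprime.of_mul_left_left ((hke.of_dvd (dvd_mul_right c m)).isCoprime_iff.mpr hd)
  have hkm : IsCoprime k m := ⟨1, -(w * u), by ring⟩
  exact ⟨k, hkc.mul_right hkm, Int.modEq_iff_dvd.mpr ⟨-(w * u), by ring⟩, hke⟩

theorem relN_iff {n : ℕ} {u v : ℤ × ℤ} :
    relN n u v ↔
      ∃ k : ℤ, IsCoprime k n ∧ v.1 ≡ k * u.1 [ZMOD n] ∧ v.2 ≡ k * u.2 [ZMOD n] := by
  simp only [relN, Int.isCoprime_iff_gcd_eq_one, Int.modEq_iff_dvd]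

namespace nAdm

variable {n c b : ℕ}

theorem exists_dcb_eq (h : nAdm n c b) :
    ∃ k < c, Nat.gcd c (b + k * (n / c)) = 1 ∧ dcb n c b = c + b + k * (n / c) := by
  obtain ⟨-, -, -, k, hk, hg⟩ := h
  have hmem : c + b + k * (n / c) ∈
      {e : ℕ | ∃ k < c, Nat.gcd c (b + k * (n / c)) = 1 ∧ e = c + b + k * (n / c)} :=
    ⟨k, hk, hg, rfl⟩
  exact Nat.sInf_mem ⟨_, hmem⟩

theorem isCoprime_dcb (h : nAdm n c b) : IsCoprime (dcb n c b : ℤ) c := by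
  obtain ⟨k, -, hg, hd⟩ := h.exists_dcb_eq
  rw [Nat.isCoprime_iff_coprime, Nat.coprime_comm, hd, Nat.add_assoc, Nat.Coprime,
    Nat.gcd_self_add_right]
  exact hg

theorem dcb_modEq (h : nAdm n c b) : (dcb n c b : ℤ) ≡ c + b [ZMOD (n / c : ℕ)] := by
  obtain ⟨k, -, -, hd⟩ := h.exists_dcb_eq
  rw [hd]
  exact Int.modEq_iff_dvd.mpr ⟨-(k : ℤ), by push_cast; ring⟩

end nAdm

theorem exists_nAdm_modEq {n c : ℕ} (hn : n ≠ 0) (hc : c ∣ n) {e : ℤ} (he : IsCoprime e c) :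
    ∃ b, nAdm n c b ∧ e ≡ c + b [ZMOD (n / c : ℕ)] := by
  set m := n / c
  have hnm : n = c * m := (Nat.mul_div_cancel' hc).symm
  have hc0 : 0 < c := Nat.pos_of_dvd_of_pos hc (Nat.pos_of_ne_zero hn)
  have hm0 : 0 < m := Nat.div_pos (Nat.le_of_dvd (Nat.pos_of_ne_zero hn) hc) hc0
  obtain ⟨r, hr, hre⟩ : ∃ r : ℕ, r < n ∧ (r : ℤ) ≡ e - c [ZMOD n] := by
    have hn' : (n : ℤ) ≠ 0 := by exact_mod_cast hn
    refine ⟨((e - c) % n).toNat, ?_, ?_⟩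
    · rw [← Int.ofNat_lt, Int.toNat_of_nonneg (Int.emod_nonneg _ hn')]
      exact Int.emod_lt_of_pos _ (by omega)
    · rw [Int.toNat_of_nonneg (Int.emod_nonneg _ hn')]
      exact Int.mod_modEq _ _
  have hrc : Nat.Coprime c r := by
    rw [Nat.coprime_comm, ← Nat.isCoprime_iff_coprime,
      (hre.of_dvd (by exact_mod_cast hc)).isCoprime_iff]
    simpa [sub_eq_add_neg] using he.add_mul_right_left (-1)
  refine ⟨r % m, ⟨hc0, hc, Nat.mod_lt r hm0, r / m, ?_, ?_⟩, ?_⟩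
  · rwa [Nat.div_lt_iff_lt_mul hm0, ← hnm]
  · rwa [Nat.mod_add_div']
  · calc e = c + (e - c) := by ring
      _ ≡ c + r [ZMOD m] := (hre.of_dvd (by exact_mod_cast Nat.div_dvd_of_dvd hc)).symm.add_left _
      _ ≡ c + (r % m : ℕ) [ZMOD m] := by
        push_cast
        exact (Int.mod_modEq _ _).symm.add_left _

theorem nAdm.eq_of_relN {n c b c' b' : ℕ} (h : nAdm n c b) (h' : nAdm n c' b')
    (hr : relN n (c, dcb n c b) (c', dcb n c' b')) : c = c' ∧ b = b' := by
  obtain ⟨k, hk, hkc, hkd⟩ := relN_iff.mp hr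
  have hcc : c = c' := by
    have hgcd := hkc.gcd_eq.trans (Int.gcd_mul_left_cancel_of_isCoprime _ hk)
    rwa [Int.gcd_natCast_natCast, Int.gcd_natCast_natCast, Nat.gcd_eq_left h.2.1,
      Nat.gcd_eq_left h'.2.1, eq_comm] at hgcd
  subst hcc
  set m := n / c
  have hn : (n : ℤ) = c * m := by exact_mod_cast (Nat.mul_div_cancel' h.2.1).symm
  have hk1 : 1 ≡ k [ZMOD m] :=
    Int.ModEq.mul_left_cancel' (c := c) (by exact_mod_cast Nat.one_le_iff_ne_zero.mp h.1)
      (by rw [mul_one, ← hn, mul_comm]; exact hkc)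
  have hbb : c + b' ≡ c + b [ZMOD m] :=
    calc (c + b' : ℤ) ≡ dcb n c b' [ZMOD m] := h'.dcb_modEq.symm
      _ ≡ k * dcb n c b [ZMOD m] := hkd.of_dvd (by exact_mod_cast Nat.div_dvd_of_dvd h.2.1)
      _ ≡ 1 * dcb n c b [ZMOD m] := hk1.symm.mul_right _
      _ ≡ c + b [ZMOD m] := by rw [one_mul]; exact h.dcb_modEq
  refine ⟨rfl, Nat.ModEq.eq_of_lt_of_lt ?_ h.2.2.1 h'.2.2.1⟩
  exact Int.natCast_modEq_iff.mp (Int.ModEq.add_left_cancel' _ hbb).symm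

theorem exists_nAdm_relN {n : ℕ} [NeZero n] {x y : ℤ} (hxy : Int.gcd (Int.gcd x y) n = 1) :
    ∃ c b : ℕ, nAdm n c b ∧ relN n (x, y) (c, dcb n c b) := by
  set c := Int.gcd x n
  have hc : c ∣ n := by exact_mod_cast Int.gcd_dvd_right x n
  obtain ⟨k, hk, hkx⟩ := exists_isCoprime_mul_modEq_gcd (n := n) x
  have hyc : IsCoprime y c :=
    (Int.isCoprime_iff_gcd_eq_one.mpr (by rwa [Int.gcd_right_comm] at hxy)).symm
  have he : IsCoprime (k * y) c :=
    (hk.of_isCoprime_of_dvd_right (by exact_mod_cast hc)).mul_left hyc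
  obtain ⟨b, hb, heb⟩ := exists_nAdm_modEq (NeZero.ne n) hc he
  obtain ⟨k', hk', hk'1, hk'e⟩ := exists_isCoprime_modEq_one_mul_modEq he hb.isCoprime_dcb
    (hb.dcb_modEq.trans heb.symm)
  have hn : (n : ℤ) = c * (n / c : ℕ) := by exact_mod_cast (Nat.mul_div_cancel' hc).symm
  rw [← hn] at hk' hk'e
  refine ⟨c, b, hb, relN_iff.mpr ⟨k' * k, hk'.mul_left hk, ?_, ?_⟩⟩
  · calc (c : ℤ) = c * 1 := (mul_one _).symm
      _ ≡ c * k' [ZMOD n] := by rw [hn]; exact hk'1.symm.mul_left'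
      _ ≡ k' * (k * x) [ZMOD n] := by rw [mul_comm]; exact hkx.symm.mul_left _
      _ = k' * k * x := by ring
  · rw [mul_assoc]; exact hk'e.symm

/-- Proposition 5.9: the map `(c, b) ↦ [c : d(c, b)]` is a bijection from the
set `P_n` of `n`-admissible pairs onto `I_n` (the `∼_n`-classes `[x : y]` with
`gcd(x, y, n) = 1`). -/
theorem admissible_pairs_biject_In (n : ℕ) (hn : 1 ≤ n) :
    (∀ c b : ℕ, nAdm n c b →
      Int.gcd (Int.gcd (c : ℤ) (dcb n c b : ℤ)) (n : ℤ) = 1) ∧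
    (∀ c b c' b' : ℕ, nAdm n c b → nAdm n c' b' →
      relN n ((c : ℤ), (dcb n c b : ℤ)) ((c' : ℤ), (dcb n c' b' : ℤ)) →
      c = c' ∧ b = b') ∧
    (∀ x y : ℤ, Int.gcd (Int.gcd x y) (n : ℤ) = 1 →
      ∃ c b : ℕ, nAdm n c b ∧ relN n (x, y) ((c : ℤ), (dcb n c b : ℤ))) := by
  have : NeZero n := ⟨by omega⟩
  refine ⟨fun c b h => ?_, fun c b c' b' => nAdm.eq_of_relN, fun x y => exists_nAdm_relN⟩
  rw [Int.gcd_comm (c : ℤ), Int.isCoprime_iff_gcd_eq_one.mp h.isCoprime_dcb, Nat.cast_one,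
    Int.gcd_one_left]
end

section
/- Let n ∈ ℕ and let (c, b) be an n-admissible pair with associated matrix A = (c, b; 0, n/c). Let (x_0, x_1, …, x_k) be the minimal partition of x_0 = b/(n/c), with x_j = p_j/q_j, gcd(p_j, q_j) = 1 and q_j ≥ 0. Then the iterates K^j(A) are well defined for j = 0, 1, …, k−1, one has K^j(A) = (q_{k−1−j}, −p_{k−1−j}; q_{k−j}, −p_{k−j})·A for each such j, and K^{k−1}(A) ∈ Y_n (so the chain of A has length k). -/
/-- The matrix `A_{(c,b)} = (c, b; 0, n/c)` attached to an `n`-admissible pair. -/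
def Amat (n c b : ℕ) : Matrix (Fin 2) (Fin 2) ℤ :=
  !![(c : ℤ), (b : ℤ); 0, ((n / c : ℕ) : ℤ)]

/-! Put `A = (c, b; 0, m)` with `m = n / c` and `M_i = (q_i, -p_i; q_{i+1}, -p_{i+1})`, so that
`M_{k-1} = 1`. The second column of `M_i A` is `e_i = q_i b - p_i m`. Unimodularity of consecutive
terms and coprimality give `x_{i-1} + x_{i+1} = t_i x_i` componentwise with `t_i ≥ 2`; hence `e`
obeys the same recurrence and increases strictly from `e_0 = 0` to `e_k = m`. Then
`⌈e_{i+1} / e_i⌉ = t_i`, i.e. `K (M_i A) = M_{i-1} A`, and the chain stops at `M_0 A`, whose upper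
right entry `e_0` vanishes. -/

theorem Kop_eq_of_add_eq_mul {a b c d a' b' t : ℤ} (hb' : 0 ≤ b') (hb'b : b' < b)
    (hc : a' + c = t * a) (hd : b' + d = t * b) :
    Kop !![a, b; c, d] = !![a', b'; a, b] := by
  have hb : (0 : ℚ) < b := by exact_mod_cast hb'.trans_lt hb'b
  have hceil : ⌈(d : ℚ) / b⌉ = t := by
    rw [Int.ceil_eq_iff, lt_div_iff₀ hb, div_le_iff₀ hb]
    constructor
    · have : ((t - 1) * b : ℤ) < d := by linarith
      exact_mod_cast this
    · exact_mod_cast (by linarith : d ≤ t * b)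
  simp only [Kop, Matrix.of_apply, Matrix.cons_val', Matrix.cons_val_zero, Matrix.cons_val_one,
    Matrix.empty_val', Matrix.cons_val_fin_one, hceil]
  rw [show -c + t * a = a' by linarith, show -d + t * b = b' by linarith]

theorem exists_add_eq_mul_of_det_eq_one {p₀ p₁ p₂ q₀ q₁ q₂ : ℤ} (h : IsCoprime p₁ q₁)
    (h₀₁ : p₀ * q₁ - p₁ * q₀ = 1) (h₁₂ : p₁ * q₂ - p₂ * q₁ = 1) :
    ∃ t, q₀ + q₂ = t * q₁ ∧ p₀ + p₂ = t * p₁ := by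
  obtain ⟨u, v, huv⟩ := h
  refine ⟨u * (p₀ + p₂) + v * (q₀ + q₂), ?_, ?_⟩
  · linear_combination (-(q₀ + q₂)) * huv + u * (h₁₂ - h₀₁)
  · linear_combination (-(p₀ + p₂)) * huv - v * (h₁₂ - h₀₁)

/-- The minimal partition `x_j = p j / q j`, `j ≤ k`, ending at `x_k = -1/0 = -∞`. -/
structure IsMinimalPartition (k : ℕ) (p q : ℕ → ℤ) : Prop where
  coprime : ∀ j ≤ k, Int.gcd (p j) (q j) = 1
  q_nonneg : ∀ j ≤ k, 0 ≤ q j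
  det_eq_one : ∀ j < k, p j * q (j + 1) - p (j + 1) * q j = 1
  q_lt : ∀ j < k, q (j + 1) < q j
  p_last : p k = -1
  q_last : q k = 0

def partitionGap (p q : ℕ → ℤ) (b m : ℤ) (i : ℕ) : ℤ :=
  q i * b - p i * m

theorem partitionGap_add_eq_mul {p q : ℕ → ℤ} {b m t : ℤ} {i j l : ℕ}
    (hq : q i + q j = t * q l) (hp : p i + p j = t * p l) :
    partitionGap p q b m i + partitionGap p q b m j = t * partitionGap p q b m l := by
  unfold partitionGap
  linear_combination b * hq - m * hp

def chainMatrix (p q : ℕ → ℤ) (c b m : ℤ) (i : ℕ) : Matrix (Fin 2) (Fin 2) ℤ :=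
  !![q i * c, partitionGap p q b m i; q (i + 1) * c, partitionGap p q b m (i + 1)]

theorem chainMatrix_eq_mul (p q : ℕ → ℤ) (c b m : ℤ) (i : ℕ) :
    chainMatrix p q c b m i = !![q i, -p i; q (i + 1), -p (i + 1)] * !![c, b; 0, m] := by
  rw [chainMatrix, partitionGap, partitionGap, Matrix.mul_fin_two]
  congr 1
  ring_nf

namespace IsMinimalPartition

variable {k : ℕ} {p q : ℕ → ℤ} {c b m : ℤ}

theorem q_pos (h : IsMinimalPartition k p q) {i : ℕ} (hi : i < k) : 0 < q i :=
  (h.q_nonneg (i + 1) hi).trans_lt (h.q_lt i hi)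

theorem q_pred_eq_one (h : IsMinimalPartition k p q) (hk : 0 < k) : q (k - 1) = 1 := by
  have hdet := h.det_eq_one (k - 1) (by omega)
  rw [Nat.sub_add_cancel hk, h.p_last, h.q_last] at hdet
  linarith

theorem exists_add_eq_mul (h : IsMinimalPartition k p q) {i : ℕ} (hi : i + 2 ≤ k) :
    ∃ t : ℤ, 2 ≤ t ∧ q i + q (i + 2) = t * q (i + 1) ∧ p i + p (i + 2) = t * p (i + 1) := by
  have hcop : IsCoprime (p (i + 1)) (q (i + 1)) :=
    Int.isCoprime_iff_gcd_eq_one.mpr (h.coprime (i + 1) (by omega))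
  obtain ⟨t, hq, hp⟩ :=
    exists_add_eq_mul_of_det_eq_one hcop (h.det_eq_one i (by omega)) (h.det_eq_one (i + 1) hi)
  have hlt := h.q_lt i (by omega)
  have hpos := h.q_pos (i := i + 1) (by omega)
  have hnn := h.q_nonneg (i + 2) hi
  refine ⟨t, ?_, hq, hp⟩
  by_contra! ht
  nlinarith

theorem partitionGap_last (h : IsMinimalPartition k p q) : partitionGap p q b m k = m := by
  simp [partitionGap, h.p_last, h.q_last]

theorem q_zero_mul_partitionGap_one (h : IsMinimalPartition k p q) (hk : 0 < k)
    (h0 : partitionGap p q b m 0 = 0) : q 0 * partitionGap p q b m 1 = m := by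
  unfold partitionGap at h0 ⊢
  linear_combination q 1 * h0 + m * h.det_eq_one 0 hk

theorem partitionGap_nonneg_lt_succ (h : IsMinimalPartition k p q) (hm : 0 < m)
    (h0 : partitionGap p q b m 0 = 0) {i : ℕ} (hi : i < k) :
    0 ≤ partitionGap p q b m i ∧ partitionGap p q b m i < partitionGap p q b m (i + 1) := by
  induction i with
  | zero =>
    have hpos : 0 < q 0 * partitionGap p q b m 1 := by
      rw [h.q_zero_mul_partitionGap_one hi h0]
      exact hm
    exact ⟨h0.ge, h0 ▸ pos_of_mul_pos_right hpos (h.q_pos hi).le⟩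
  | succ i ih =>
    obtain ⟨hnn, hlt⟩ := ih (by omega)
    obtain ⟨t, ht, hq, hp⟩ := h.exists_add_eq_mul (i := i) (by omega)
    have hrec := partitionGap_add_eq_mul (b := b) (m := m) hq hp
    have := mul_le_mul_of_nonneg_right ht (hnn.trans hlt.le)
    constructor <;> linarith

theorem partitionGap_succ_pos (h : IsMinimalPartition k p q) (hm : 0 < m)
    (h0 : partitionGap p q b m 0 = 0) {i : ℕ} (hi : i < k) : 0 < partitionGap p q b m (i + 1) :=
  have hgap := h.partitionGap_nonneg_lt_succ hm h0 hi
  hgap.1.trans_lt hgap.2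

theorem p_pred_eq_zero (h : IsMinimalPartition k p q) (hm : 0 < m) (h0 : partitionGap p q b m 0 = 0)
    (hb : 0 ≤ b) (hbm : b < m) (hk : 0 < k) : p (k - 1) = 0 := by
  have hgap := h.partitionGap_nonneg_lt_succ hm h0 (i := k - 1) (by omega)
  rw [Nat.sub_add_cancel hk, h.partitionGap_last, partitionGap, h.q_pred_eq_one hk] at hgap
  obtain ⟨hlo, hhi⟩ := hgap
  rcases lt_trichotomy (p (k - 1)) 0 with hneg | hzero | hpos
  · nlinarith
  · exact hzero
  · nlinarith

theorem Kop_chainMatrix_succ (h : IsMinimalPartition k p q) (hm : 0 < m)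
    (h0 : partitionGap p q b m 0 = 0) {i : ℕ} (hi : i + 2 ≤ k) :
    Kop (chainMatrix p q c b m (i + 1)) = chainMatrix p q c b m i := by
  obtain ⟨t, -, hq, hp⟩ := h.exists_add_eq_mul hi
  obtain ⟨hnn, hlt⟩ := h.partitionGap_nonneg_lt_succ hm h0 (i := i) (by omega)
  exact Kop_eq_of_add_eq_mul hnn hlt (by linear_combination c * hq) (partitionGap_add_eq_mul hq hp)

theorem iterate_Kop_chainMatrix (h : IsMinimalPartition k p q) (hm : 0 < m)
    (h0 : partitionGap p q b m 0 = 0) {j : ℕ} (hj : j < k) :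
    Kop^[j] (chainMatrix p q c b m (k - 1)) = chainMatrix p q c b m (k - 1 - j) := by
  induction j with
  | zero => rfl
  | succ j ih =>
    rw [Function.iterate_succ_apply', ih (by omega), show k - 1 - j = k - 1 - (j + 1) + 1 by omega]
    exact h.Kop_chainMatrix_succ hm h0 (by omega)

theorem chainMatrix_pred (h : IsMinimalPartition k p q) (hm : 0 < m)
    (h0 : partitionGap p q b m 0 = 0) (hb : 0 ≤ b) (hbm : b < m) (hk : 0 < k) :
    chainMatrix p q c b m (k - 1) = !![c, b; 0, m] := by
  rw [chainMatrix, Nat.sub_add_cancel hk, h.partitionGap_last, partitionGap, h.q_pred_eq_one hk,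
    h.p_pred_eq_zero hm h0 hb hbm hk, h.q_last]
  simp

theorem chainMatrix_mem_Sset (h : IsMinimalPartition k p q) (hc : 0 < c) (hm : 0 < m)
    (h0 : partitionGap p q b m 0 = 0) {n : ℕ} (hn : (n : ℤ) = c * m) {i : ℕ} (hi : i < k) :
    chainMatrix p q c b m i ∈ Sset n := by
  obtain ⟨hnn, hlt⟩ := h.partitionGap_nonneg_lt_succ hm h0 hi
  refine ⟨?_, ?_, hnn, hlt, ?_⟩ <;> simp only [chainMatrix, Matrix.of_apply, Matrix.cons_val',
    Matrix.cons_val_zero, Matrix.cons_val_one, Matrix.empty_val', Matrix.cons_val_fin_one]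
  · exact mul_nonneg (h.q_nonneg (i + 1) hi) hc.le
  · exact mul_lt_mul_of_pos_right (h.q_lt i hi) hc
  · unfold partitionGap
    linear_combination c * m * h.det_eq_one i hi - hn

theorem chainMatrix_succ_notMem_Yset (h : IsMinimalPartition k p q) (hm : 0 < m)
    (h0 : partitionGap p q b m 0 = 0) {n : ℕ} {i : ℕ} (hi : i < k) :
    chainMatrix p q c b m (i + 1) ∉ Yset n := by
  rintro ⟨c', a', -, -, -, hY⟩
  have h01 := congrFun (congrFun hY 0) 1
  simp only [chainMatrix, Matrix.of_apply, Matrix.cons_val', Matrix.cons_val_zero,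
    Matrix.cons_val_one, Matrix.empty_val', Matrix.cons_val_fin_one] at h01
  exact (h.partitionGap_succ_pos hm h0 hi).ne' h01

theorem chainMatrix_zero_mem_Yset (h : IsMinimalPartition k p q) (hc : 0 < c)
    (h0 : partitionGap p q b m 0 = 0) {n : ℕ} (hn : (n : ℤ) = c * m) (hk : 0 < k) :
    chainMatrix p q c b m 0 ∈ Yset n := by
  have hn' : (n : ℤ) = q 0 * c * partitionGap p q b m 1 := by
    linear_combination hn - c * h.q_zero_mul_partitionGap_one hk h0
  have hne : q 0 * c ≠ 0 := (mul_pos (h.q_pos hk) hc).ne'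
  refine ⟨q 0 * c, q 1 * c, ⟨_, hn'⟩, mul_nonneg (h.q_nonneg 1 hk) hc.le,
    mul_lt_mul_of_pos_right (h.q_lt 0 hk) hc, ?_⟩
  rw [hn', Int.mul_ediv_cancel_left _ hne, chainMatrix, h0]

end IsMinimalPartition

theorem K_iterates_eq_minimal_partition_general (n : ℕ) (c b : ℕ)
    (hc : 1 ≤ c) (hcn : c ∣ n) (hb : b < n / c)
    (k : ℕ) (p q : ℕ → ℤ)
    (hcop : ∀ j ≤ k, Int.gcd (p j) (q j) = 1)
    (hqnn : ∀ j ≤ k, 0 ≤ q j)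
    (hq0 : 0 < q 0)
    (hx0 : (p 0 : ℚ) / (q 0 : ℚ) = (b : ℚ) / ((n / c : ℕ) : ℚ))
    (hdet : ∀ j < k, p j * q (j + 1) - p (j + 1) * q j = 1)
    (hdec : ∀ j < k, q (j + 1) < q j)
    (hpk : p k = -1) (hqk : q k = 0) :
    (∀ j < k, Kop^[j] (Amat n c b) ∈ Sset n) ∧
    (∀ j, j + 1 < k → Kop^[j] (Amat n c b) ∉ Yset n) ∧
    Kop^[k - 1] (Amat n c b) ∈ Yset n ∧
    (∀ j < k, Kop^[j] (Amat n c b) =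
      !![q (k - 1 - j), -p (k - 1 - j); q (k - j), -p (k - j)] * Amat n c b) := by
  have hP : IsMinimalPartition k p q := ⟨hcop, hqnn, hdet, hdec, hpk, hqk⟩
  have hk : 0 < k := Nat.pos_of_ne_zero fun hk => by subst hk; omega
  set m : ℕ := n / c
  have hcZ : (0 : ℤ) < c := by exact_mod_cast hc
  have hm : (0 : ℤ) < m := by omega
  have hn : (n : ℤ) = c * m := by exact_mod_cast (Nat.mul_div_cancel' hcn).symm
  have h0 : partitionGap p q b m 0 = 0 := by
    rw [div_eq_div_iff (by positivity) (by exact_mod_cast hm.ne')] at hx0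
    unfold partitionGap
    exact_mod_cast (by linarith : (q 0 * b : ℚ) - p 0 * m = 0)
  have hiter : ∀ j < k, Kop^[j] (Amat n c b) = chainMatrix p q c b m (k - 1 - j) := by
    intro j hj
    rw [Amat, ← hP.chainMatrix_pred hm h0 (by positivity) (by omega) hk]
    exact hP.iterate_Kop_chainMatrix hm h0 hj
  refine ⟨fun j hj => ?_, fun j hj => ?_, ?_, fun j hj => ?_⟩
  · rw [hiter j hj]
    exact hP.chainMatrix_mem_Sset hcZ hm h0 hn (by omega)
  · rw [hiter j (by omega), show k - 1 - j = k - 2 - j + 1 by omega]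
    exact hP.chainMatrix_succ_notMem_Yset hm h0 (by omega)
  · rw [hiter (k - 1) (by omega), Nat.sub_self]
    exact hP.chainMatrix_zero_mem_Yset hcZ h0 hn hk
  · rw [hiter j hj, chainMatrix_eq_mul, show k - 1 - j + 1 = k - j by omega]
    rfl

/-- Lemma 6.3: let `(c, b)` be an `n`-admissible pair with associated matrix
`A = (c, b; 0, n/c)`, and let `(x_0, …, x_k)` be the minimal partition of
`x_0 = b/(n/c)`, with `x_j = p_j/q_j`, `gcd(p_j, q_j) = 1`, `q_j ≥ 0`.  Then
the iterates `K^j(A)` are well defined for `j = 0, …, k−1` (i.e. they lie in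
`S_n`, and outside `Y_n` for `j < k−1`), one has
`K^j(A) = (q_{k−1−j}, −p_{k−1−j}; q_{k−j}, −p_{k−j})·A`, and
`K^{k−1}(A) ∈ Y_n`, so the chain of `A` has length `k`. -/
theorem K_iterates_eq_minimal_partition (n : ℕ) (hn : 1 ≤ n) (c b : ℕ)
    (hc : 1 ≤ c) (hcn : c ∣ n) (hb : b < n / c)
    (hadm : ∃ k < c, Nat.gcd c (b + k * (n / c)) = 1)
    (k : ℕ) (p q : ℕ → ℤ)
    (hcop : ∀ j ≤ k, Int.gcd (p j) (q j) = 1)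
    (hqnn : ∀ j ≤ k, 0 ≤ q j)
    (hq0 : 0 < q 0)
    (hx0 : (p 0 : ℚ) / (q 0 : ℚ) = (b : ℚ) / ((n / c : ℕ) : ℚ))
    (hdet : ∀ j < k, p j * q (j + 1) - p (j + 1) * q j = 1)
    (hdec : ∀ j < k, q (j + 1) < q j)
    (hpk : p k = -1) (hqk : q k = 0) :
    (∀ j < k, Kop^[j] (Amat n c b) ∈ Sset n) ∧
    (∀ j, j + 1 < k → Kop^[j] (Amat n c b) ∉ Yset n) ∧
    Kop^[k - 1] (Amat n c b) ∈ Yset n ∧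
    (∀ j < k, Kop^[j] (Amat n c b) =
      !![q (k - 1 - j), -p (k - 1 - j); q (k - j), -p (k - j)] * Amat n c b) :=
  K_iterates_eq_minimal_partition_general n c b hc hcn hb k p q hcop hqnn hq0 hx0 hdet hdec hpk hqk
end
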